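/- arXiv:1812.01437 — 2 statements merged into one kernel-verified Lean document; each statement's English description precedes it below -/
import Mathlib

section
/- Let F_l(z_l) = D_l + C_l(z_lI_{n_l} − A_l)^{-1}B_l be a realization of a p_l×m_l rational function and F_r(z_r) = D_r + C_r(z_rI_{n_r} − A_r)^{-1}B_r a realization of a p_r×m_r rational function. Define the inflated matrices 𝐀_l = A_l ⊗ I_{p_r}, 𝐁_l = B_l ⊗ I_{p_r}, 𝐂_l = C_l ⊗ I_{p_r}, 𝐃_l = D_l ⊗ I_{p_r}, 𝐀_r = I_{m_l} ⊗ A_r, 𝐁_r = I_{m_l} ⊗ B_r, 𝐂_r = I_{m_l} ⊗ C_r, 𝐃_r = I_{m_l} ⊗ D_r. Then for all z_l, z_r ∈ ℂ with z_lI_{n_l} − A_l and z_rI_{n_r} − A_r invertible: F_l(z_l) ⊗ F_r(z_r) = 𝐃_l𝐃_r + [𝐂_l 𝐃_l𝐂_r] · ( diag(z_lI_{n_lp_r}, z_rI_{m_ln_r}) − [[𝐀_l, 𝐁_l𝐂_r],[0, 𝐀_r]] )^{-1} · [𝐁_l𝐃_r ; 𝐁_r], where the block 2×2 matrix in the resolvent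 is invertible and 𝐃_l𝐃_r = D_l ⊗ D_r. -/
/-!
`F_l ⊗ F_r = (F_l ⊗ I)(I ⊗ F_r)`, and the inflated matrices are realizations of the two factors
`F_l ⊗ I` and `I ⊗ F_r`, because `(z I - A) ⊗ I = z I - A ⊗ I` and `(X ⊗ I)⁻¹ = X⁻¹ ⊗ I`.
The claimed realization is then the series connection of these two realizations: inverting the
block upper-triangular resolvent blockwise expands `[𝐂_l  𝐃_l𝐂_r] (⋯)⁻¹ [𝐁_l𝐃_r ; 𝐁_r]` into the
three cross terms of `(𝐃_l + 𝐂_l (z_l I - 𝐀_l)⁻¹ 𝐁_l)(𝐃_r + 𝐂_r (z_r I - 𝐀_r)⁻¹ 𝐁_r)`.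
-/

open Matrix
open scoped Kronecker

namespace Matrix

variable {R : Type*} [CommRing R]

section Kronecker

variable {l m n p : Type*}

theorem sub_kronecker (A₁ A₂ : Matrix l m R) (B : Matrix n p R) :
    (A₁ - A₂) ⊗ₖ B = A₁ ⊗ₖ B - A₂ ⊗ₖ B := by
  ext ⟨i, j⟩ ⟨k, r⟩
  simp [sub_mul]

theorem kronecker_sub (A : Matrix l m R) (B₁ B₂ : Matrix n p R) :
    A ⊗ₖ (B₁ - B₂) = A ⊗ₖ B₁ - A ⊗ₖ B₂ := by
  ext ⟨i, j⟩ ⟨k, r⟩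
  simp [mul_sub]

theorem kronecker_eq_kronecker_one_mul_one_kronecker [Fintype m] [DecidableEq m] [Fintype n]
    [DecidableEq n] (A : Matrix l m R) (B : Matrix n p R) :
    A ⊗ₖ B = (A ⊗ₖ (1 : Matrix n n R)) * ((1 : Matrix m m R) ⊗ₖ B) := by
  rw [← mul_kronecker_mul, Matrix.mul_one, Matrix.one_mul]

end Kronecker

section Realization

variable {n m p q : Type*} [DecidableEq n] [DecidableEq q]

theorem smul_one_sub_kronecker_one (z : R) (A : Matrix n n R) :
    z • 1 - A ⊗ₖ (1 : Matrix q q R) = (z • 1 - A) ⊗ₖ 1 := by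
  rw [sub_kronecker, smul_kronecker, one_kronecker_one]

theorem smul_one_sub_one_kronecker (z : R) (A : Matrix n n R) :
    z • 1 - (1 : Matrix q q R) ⊗ₖ A = 1 ⊗ₖ (z • 1 - A) := by
  rw [kronecker_sub, kronecker_smul, one_kronecker_one]

theorem realization_kronecker_one [Fintype n] [Fintype q] (A : Matrix n n R) (B : Matrix n m R)
    (C : Matrix p n R) (D : Matrix p m R) (z : R) :
    (D + C * (z • 1 - A)⁻¹ * B) ⊗ₖ (1 : Matrix q q R)
      = D ⊗ₖ (1 : Matrix q q R) + C ⊗ₖ (1 : Matrix q q R) *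
          (z • 1 - A ⊗ₖ (1 : Matrix q q R))⁻¹ * B ⊗ₖ (1 : Matrix q q R) := by
  rw [smul_one_sub_kronecker_one, inv_kronecker, inv_one, ← mul_kronecker_mul,
    ← mul_kronecker_mul, Matrix.mul_one, Matrix.mul_one, add_kronecker]

theorem one_kronecker_realization [Fintype n] [Fintype q] (A : Matrix n n R) (B : Matrix n m R)
    (C : Matrix p n R) (D : Matrix p m R) (z : R) :
    (1 : Matrix q q R) ⊗ₖ (D + C * (z • 1 - A)⁻¹ * B)
      = (1 : Matrix q q R) ⊗ₖ D + (1 : Matrix q q R) ⊗ₖ C *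
          (z • 1 - (1 : Matrix q q R) ⊗ₖ A)⁻¹ * (1 : Matrix q q R) ⊗ₖ B := by
  rw [smul_one_sub_one_kronecker, inv_kronecker, inv_one, ← mul_kronecker_mul,
    ← mul_kronecker_mul, Matrix.mul_one, Matrix.mul_one, kronecker_add]

end Realization

section Series

theorem fromBlocks_sub {l m n o : Type*} (A A' : Matrix n l R) (B B' : Matrix n m R)
    (C C' : Matrix o l R) (D D' : Matrix o m R) :
    fromBlocks A B C D - fromBlocks A' B' C' D'
      = fromBlocks (A - A') (B - B') (C - C') (D - D') := by
  simp only [sub_eq_add_neg, fromBlocks_neg, fromBlocks_add]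

variable {n₁ n₂ m k p : Type*} [DecidableEq n₁] [DecidableEq n₂]

theorem fromBlocks_smul_one_sub_fromBlocks_zero₂₁ (z₁ z₂ : R) (A₁ : Matrix n₁ n₁ R)
    (E : Matrix n₁ n₂ R) (A₂ : Matrix n₂ n₂ R) :
    fromBlocks (z₁ • 1) 0 0 (z₂ • 1) - fromBlocks A₁ E 0 A₂
      = fromBlocks (z₁ • 1 - A₁) (-E) 0 (z₂ • 1 - A₂) := by
  rw [fromBlocks_sub, zero_sub, sub_zero]

variable {z₁ z₂ : R} {A₁ : Matrix n₁ n₁ R} {A₂ : Matrix n₂ n₂ R}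

theorem isUnit_fromBlocks_smul_one_sub_fromBlocks_zero₂₁ [Fintype n₁] [Fintype n₂]
    (h₁ : IsUnit (z₁ • 1 - A₁)) (h₂ : IsUnit (z₂ • 1 - A₂)) (E : Matrix n₁ n₂ R) :
    IsUnit (fromBlocks (z₁ • 1) 0 0 (z₂ • 1) - fromBlocks A₁ E 0 A₂) := by
  rw [fromBlocks_smul_one_sub_fromBlocks_zero₂₁]
  exact isUnit_fromBlocks_zero₂₁.mpr ⟨h₁, h₂⟩

theorem realization_mul_realization [Fintype n₁] [Fintype n₂] [Fintype k]
    (h₁ : IsUnit (z₁ • 1 - A₁)) (h₂ : IsUnit (z₂ • 1 - A₂)) (B₁ : Matrix n₁ k R) (C₁ : Matrix p n₁ R) (D₁ : Matrix p k R)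
    (B₂ : Matrix n₂ m R) (C₂ : Matrix k n₂ R) (D₂ : Matrix k m R) :
    (D₁ + C₁ * (z₁ • 1 - A₁)⁻¹ * B₁) * (D₂ + C₂ * (z₂ • 1 - A₂)⁻¹ * B₂)
      = D₁ * D₂ + fromCols C₁ (D₁ * C₂) *
          (fromBlocks (z₁ • 1) 0 0 (z₂ • 1) - fromBlocks A₁ (B₁ * C₂) 0 A₂)⁻¹ *
          fromRows (B₁ * D₂) B₂ := by
  rw [fromBlocks_smul_one_sub_fromBlocks_zero₂₁,
    inv_fromBlocks_zero₂₁_of_isUnit_iff _ _ _ (iff_of_true h₁ h₂), fromCols_mul_fromBlocks,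
    fromCols_mul_fromRows]
  simp only [Matrix.mul_zero, add_zero, Matrix.mul_neg, Matrix.neg_mul, neg_neg,
    Matrix.add_mul, Matrix.mul_add, Matrix.mul_assoc]
  abel

end Series

end Matrix

/-- Realization of the tensor (Kronecker) product of two rational functions in terms of the
"inflated" realization matrices `𝐀_l = A_l ⊗ I, 𝐁_l = B_l ⊗ I, …, 𝐀_r = I ⊗ A_r, …`:
`F_l(z_l) ⊗ F_r(z_r) = 𝐃_l𝐃_r + [𝐂_l  𝐃_l𝐂_r] (diag(z_lI, z_rI) − [[𝐀_l, 𝐁_l𝐂_r],[0, 𝐀_r]])⁻¹ [𝐁_l𝐃_r ; 𝐁_r]`,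
the block matrix in the resolvent being invertible and `𝐃_l𝐃_r = D_l ⊗ D_r`. -/
theorem realization_of_tensor_product (nl nr ml mr pl pr : ℕ)
    (Al : Matrix (Fin nl) (Fin nl) ℂ) (Bl : Matrix (Fin nl) (Fin ml) ℂ)
    (Cl : Matrix (Fin pl) (Fin nl) ℂ) (Dl : Matrix (Fin pl) (Fin ml) ℂ)
    (Ar : Matrix (Fin nr) (Fin nr) ℂ) (Br : Matrix (Fin nr) (Fin mr) ℂ)
    (Cr : Matrix (Fin pr) (Fin nr) ℂ) (Dr : Matrix (Fin pr) (Fin mr) ℂ)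
    (zl zr : ℂ)
    (hl : IsUnit (zl • (1 : Matrix (Fin nl) (Fin nl) ℂ) - Al))
    (hr : IsUnit (zr • (1 : Matrix (Fin nr) (Fin nr) ℂ) - Ar)) :
    let bAl := Al ⊗ₖ (1 : Matrix (Fin pr) (Fin pr) ℂ)
    let bBl := Bl ⊗ₖ (1 : Matrix (Fin pr) (Fin pr) ℂ)
    let bCl := Cl ⊗ₖ (1 : Matrix (Fin pr) (Fin pr) ℂ)
    let bDl := Dl ⊗ₖ (1 : Matrix (Fin pr) (Fin pr) ℂ)
    let bAr := (1 : Matrix (Fin ml) (Fin ml) ℂ) ⊗ₖ Ar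
    let bBr := (1 : Matrix (Fin ml) (Fin ml) ℂ) ⊗ₖ Br
    let bCr := (1 : Matrix (Fin ml) (Fin ml) ℂ) ⊗ₖ Cr
    let bDr := (1 : Matrix (Fin ml) (Fin ml) ℂ) ⊗ₖ Dr
    IsUnit (fromBlocks (zl • 1) 0 0 (zr • 1) - fromBlocks bAl (bBl * bCr) 0 bAr) ∧
    bDl * bDr = Dl ⊗ₖ Dr ∧
    (Dl + Cl * (zl • 1 - Al)⁻¹ * Bl) ⊗ₖ (Dr + Cr * (zr • 1 - Ar)⁻¹ * Br)
      = bDl * bDr +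
        fromCols bCl (bDl * bCr) *
          (fromBlocks (zl • 1) 0 0 (zr • 1) - fromBlocks bAl (bBl * bCr) 0 bAr)⁻¹ *
          fromRows (bBl * bDr) bBr := by
  intro bAl bBl bCl bDl bAr bBr bCr bDr
  have hbl : IsUnit (zl • 1 - bAl) := by
    rw [smul_one_sub_kronecker_one]
    exact hl.kronecker isUnit_one
  have hbr : IsUnit (zr • 1 - bAr) := by
    rw [smul_one_sub_one_kronecker]
    exact isUnit_one.kronecker hr
  refine ⟨isUnit_fromBlocks_smul_one_sub_fromBlocks_zero₂₁ hbl hbr _,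
    (kronecker_eq_kronecker_one_mul_one_kronecker Dl Dr).symm, ?_⟩
  rw [kronecker_eq_kronecker_one_mul_one_kronecker, realization_kronecker_one,
    one_kronecker_realization]
  exact realization_mul_realization hbl hbr _ _ _ _ _ _
end

section
/- Let A_l ∈ ℂ^{n_l×n_l}, B_l ∈ ℂ^{n_l×m_l}, C_l ∈ ℂ^{p_l×n_l}, A_r ∈ ℂ^{n_r×n_r}, B_r ∈ ℂ^{n_r×m_r}, C_r ∈ ℂ^{p_r×n_r}, and let z_l, z_r ∈ ℂ with z_lI_{n_l} − A_l and z_rI_{n_r} − A_r invertible. Then (C_l(z_lI_{n_l} − A_l)^{-1}B_l) ⊗ (C_r(z_rI_{n_r} − A_r)^{-1}B_r) = (C_l ⊗ I_{p_r})(z_lI_{n_lp_r} − A_l ⊗ I_{p_r})^{-1}(B_l ⊗ I_{p_r})(I_{m_l} ⊗ C_r)(z_rI_{m_ln_r} − I_{m_l} ⊗ A_r)^{-1}(I_{m_l} ⊗ B_r). -/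
open Matrix
open scoped Kronecker

lemma sub_kronecker' {m n p q : Type*} (X Y : Matrix m n ℂ) (B : Matrix p q ℂ) :
    (X - Y) ⊗ₖ B = X ⊗ₖ B - Y ⊗ₖ B := by
  ext i j
  simp [Matrix.kroneckerMap_apply, Matrix.sub_apply, sub_mul]

lemma kronecker_sub' {m n p q : Type*} (A : Matrix m n ℂ) (X Y : Matrix p q ℂ) :
    A ⊗ₖ (X - Y) = A ⊗ₖ X - A ⊗ₖ Y := by
  ext i j
  simp [Matrix.kroneckerMap_apply, Matrix.sub_apply, mul_sub]

/-- `(C_l(z_lI − A_l)⁻¹B_l) ⊗ (C_r(z_rI − A_r)⁻¹B_r)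
      = (C_l ⊗ I)(z_lI − A_l ⊗ I)⁻¹(B_l ⊗ I)(I ⊗ C_r)(z_rI − I ⊗ A_r)⁻¹(I ⊗ B_r)`. -/
theorem resolvent_kronecker_resolvent (nl nr ml mr pl pr : ℕ)
    (Al : Matrix (Fin nl) (Fin nl) ℂ) (Bl : Matrix (Fin nl) (Fin ml) ℂ)
    (Cl : Matrix (Fin pl) (Fin nl) ℂ)
    (Ar : Matrix (Fin nr) (Fin nr) ℂ) (Br : Matrix (Fin nr) (Fin mr) ℂ)
    (Cr : Matrix (Fin pr) (Fin nr) ℂ)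
    (zl zr : ℂ)
    (hl : IsUnit (zl • (1 : Matrix (Fin nl) (Fin nl) ℂ) - Al))
    (hr : IsUnit (zr • (1 : Matrix (Fin nr) (Fin nr) ℂ) - Ar)) :
    (Cl * (zl • 1 - Al)⁻¹ * Bl) ⊗ₖ (Cr * (zr • 1 - Ar)⁻¹ * Br)
      = (Cl ⊗ₖ (1 : Matrix (Fin pr) (Fin pr) ℂ)) *
        (zl • (1 : Matrix (Fin nl × Fin pr) (Fin nl × Fin pr) ℂ) -
          Al ⊗ₖ (1 : Matrix (Fin pr) (Fin pr) ℂ))⁻¹ *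
        (Bl ⊗ₖ (1 : Matrix (Fin pr) (Fin pr) ℂ)) *
        ((1 : Matrix (Fin ml) (Fin ml) ℂ) ⊗ₖ Cr) *
        (zr • (1 : Matrix (Fin ml × Fin nr) (Fin ml × Fin nr) ℂ) -
          (1 : Matrix (Fin ml) (Fin ml) ℂ) ⊗ₖ Ar)⁻¹ *
        ((1 : Matrix (Fin ml) (Fin ml) ℂ) ⊗ₖ Br) := by
  have key1 : zl • (1 : Matrix (Fin nl × Fin pr) (Fin nl × Fin pr) ℂ) -
      Al ⊗ₖ (1 : Matrix (Fin pr) (Fin pr) ℂ)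
      = (zl • 1 - Al) ⊗ₖ (1 : Matrix (Fin pr) (Fin pr) ℂ) := by
    rw [sub_kronecker', Matrix.smul_kronecker, Matrix.one_kronecker_one]
  have key2 : zr • (1 : Matrix (Fin ml × Fin nr) (Fin ml × Fin nr) ℂ) -
      (1 : Matrix (Fin ml) (Fin ml) ℂ) ⊗ₖ Ar
      = (1 : Matrix (Fin ml) (Fin ml) ℂ) ⊗ₖ (zr • 1 - Ar) := by
    rw [kronecker_sub', Matrix.kronecker_smul, Matrix.one_kronecker_one]
  rw [key1, key2, Matrix.inv_kronecker, Matrix.inv_kronecker, inv_one,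
    ← Matrix.mul_kronecker_mul, ← Matrix.mul_kronecker_mul, ← Matrix.mul_kronecker_mul,
    ← Matrix.mul_kronecker_mul, ← Matrix.mul_kronecker_mul]
  simp [mul_one, one_mul]
end
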